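/- arXiv:0706.1497 — 2 statements merged into one kernel-verified Lean document; each statement's English description precedes it below -/
import Mathlib

section
/- For every ε > 0, the number of integers d ≤ N that do NOT have a divisor d₀ > N^{1-ε} with ω(d₀) < ε · log log N is o(N) as N → ∞. -/
open Filter
open scoped Classical

/-!
Split `d = s · r` into its `y`-smooth part `s` and its `y`-rough part `r`. Every prime factor
of `r` exceeds `y`, so `ω(r) ≤ log N / log y`, and `r > N^(1-ε)` unless `d ≤ N^(1-ε/2)` or
`s > N^(ε/2)`. The first exception occurs for at most `N^(1-ε/2)` integers. For the second,
Legendre's formula gives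
`∑_{d ≤ N} log s(d) = ∑_{p ≤ y} v_p(N!) log p ≤ 2N ∑_{p ≤ y} log p / p = O(N log y)`
by Mertens' estimate, so by Markov's inequality it occurs for `O(N log y / (ε log N))` integers.
Taking `log y = 2 log N / (ε log log N)` makes `ω(r) ≤ (ε/2) log log N` while both exceptional
sets are `o(N)`.
-/

open Finset Real
open _root_.Nat hiding log

noncomputable def smoothPart (y : ℝ) (n : ℕ) : ℕ :=
  (n.factorization.filter fun p : ℕ => (p : ℝ) ≤ y).prod (· ^ ·)

noncomputable def roughPart (y : ℝ) (n : ℕ) : ℕ :=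
  (n.factorization.filter fun p : ℕ => ¬(p : ℝ) ≤ y).prod (· ^ ·)

lemma factorization_filter_le (n : ℕ) (q : ℕ → Prop) [DecidablePred q] :
    n.factorization.filter q ≤ n.factorization := fun p => by
  rw [Finsupp.filter_apply]
  split_ifs <;> simp

section SmoothRough

variable {y : ℝ} {n : ℕ}

lemma smoothPart_mul_roughPart (hn : n ≠ 0) : smoothPart y n * roughPart y n = n := by
  rw [smoothPart, roughPart, Finsupp.prod_filter_mul_prod_filter_not,
    prod_factorization_pow_eq_self hn]

lemma smoothPart_dvd (y : ℝ) (n : ℕ) : smoothPart y n ∣ n :=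
  prod_pow_dvd_of_le_factorization (factorization_filter_le n _)

lemma roughPart_dvd (y : ℝ) (n : ℕ) : roughPart y n ∣ n :=
  prod_pow_dvd_of_le_factorization (factorization_filter_le n _)

lemma lt_of_mem_primeFactors_roughPart {p : ℕ} (hp : p ∈ (roughPart y n).primeFactors) :
    y < p := by
  rw [← support_factorization, roughPart,
    factorization_prod_pow_eq_self_of_le_factorization (factorization_filter_le n _),
    Finsupp.support_filter, mem_filter] at hp
  exact not_le.1 hp.2

lemma log_smoothPart (y : ℝ) (n : ℕ) :
    log (smoothPart y n) = ∑ p ∈ primesLE ⌊y⌋₊, n.factorization p * log p := by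
  rw [log_nat_eq_sum_factorization, smoothPart,
    factorization_prod_pow_eq_self_of_le_factorization (factorization_filter_le n _),
    Finsupp.sum_filter_index, Finsupp.support_filter]
  refine sum_subset (fun p hp => ?_) (fun p hp hp' => ?_)
  · rw [mem_filter, support_factorization] at hp
    exact mem_primesLE.2 ⟨le_floor hp.2, prime_of_mem_primeFactors hp.1⟩
  · have hpy : (p : ℝ) ≤ y :=
      (le_floor_iff' (prime_of_mem_primesLE hp).ne_zero).1 (mem_primesLE.1 hp).1
    have : n.factorization p = 0 :=
      Finsupp.notMem_support_iff.1 fun h => hp' (mem_filter.2 ⟨h, hpy⟩)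
    simp [this]

lemma div_lt_roughPart {A B : ℝ} (hn : n ≠ 0) (hB : 0 < B) (hA : A < n)
    (hsmooth : (smoothPart y n : ℝ) ≤ B) : A / B < roughPart y n := by
  rw [div_lt_iff₀ hB]
  calc A < n := hA
    _ = smoothPart y n * roughPart y n := by exact_mod_cast (smoothPart_mul_roughPart hn).symm
    _ ≤ roughPart y n * B := by
        rw [mul_comm]
        exact mul_le_mul_of_nonneg_left hsmooth (cast_nonneg _)

end SmoothRough

lemma card_primeFactors_mul_log_le_log {y : ℝ} {m : ℕ} (hy : 0 < y)
    (h : ∀ p ∈ m.primeFactors, y < p) : #m.primeFactors * log y ≤ log m := by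
  rcases eq_or_ne m 0 with rfl | hm
  · simp
  calc #m.primeFactors * log y = #m.primeFactors • log y := (nsmul_eq_mul _ _).symm
    _ ≤ ∑ p ∈ m.primeFactors, log p :=
        card_nsmul_le_sum _ _ _ fun p hp => log_le_log hy (h p hp).le
    _ = log (∏ p ∈ m.primeFactors, p : ℕ) := by
        push_cast
        exact (log_prod fun p hp => mod_cast (prime_of_mem_primeFactors hp).ne_zero).symm
    _ ≤ log m := by
        gcongr
        · exact_mod_cast pos_of_dvd_of_pos (prod_primeFactors_dvd m) (pos_of_ne_zero hm)
        · exact le_of_dvd (pos_of_ne_zero hm) (prod_primeFactors_dvd m)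

lemma sum_factorization_Icc (N p : ℕ) :
    ∑ d ∈ Icc 1 N, d.factorization p = (N !).factorization p := by
  rw [← prod_Ico_id_eq_factorial,
    factorization_prod_apply fun d hd => (zero_lt_one.trans_le (mem_Ico.1 hd).1).ne',
    Ico_add_one_right_eq_Icc]

lemma factorization_factorial_le_two_mul_div {p : ℕ} (hp : p.Prime) (N : ℕ) :
    ((N !).factorization p : ℝ) ≤ 2 * N / p := by
  have hp2 : (2 : ℝ) ≤ p := by exact_mod_cast hp.two_le
  calc ((N !).factorization p : ℝ) ≤ (N / (p - 1) : ℕ) := by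
        exact_mod_cast factorization_factorial_le_div_pred hp N
    _ ≤ N / (p - 1 : ℝ) := by
        rw [← cast_pred hp.pos]
        exact cast_div_le
    _ ≤ 2 * N / p := by
        rw [div_le_div_iff₀ (by linarith) (by linarith)]
        nlinarith [(N.cast_nonneg : (0 : ℝ) ≤ N)]

lemma div_le_factorization_factorial {p : ℕ} (hp : p.Prime) (N : ℕ) :
    N / p ≤ (N !).factorization p :=
  calc N / p ≤ (p * (N / p))!.factorization p := by
        rw [factorization_factorial_mul hp]
        exact le_add_self
    _ ≤ (N !).factorization p :=
        (factorization_le_iff_dvd (factorial_ne_zero _) (factorial_ne_zero _)).2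
          (factorial_dvd_factorial (mul_div_le N p)) p

/-- Mertens' estimate, via `n ∑ log p / p ≤ ∑ (⌊n/p⌋ + 1) log p ≤ log n! + θ(n)`. -/
lemma sum_primesLE_log_div_le (n : ℕ) : ∑ p ∈ primesLE n, log p / p ≤ log n + log 4 := by
  rcases n.eq_zero_or_pos with rfl | hn
  · simp [primesLE_zero, log_nonneg]
  have hn' : (0 : ℝ) < n := by exact_mod_cast hn
  rw [← mul_le_mul_iff_right₀ hn']
  calc n * ∑ p ∈ primesLE n, log p / p = ∑ p ∈ primesLE n, (n / p : ℝ) * log p := by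
        rw [mul_sum]
        exact sum_congr rfl fun p _ => by ring
    _ ≤ ∑ p ∈ primesLE n, ((n / p : ℕ) + 1 : ℝ) * log p := by
        refine sum_le_sum fun p _ => mul_le_mul_of_nonneg_right ?_ (log_natCast_nonneg p)
        rw [← floor_div_eq_div (K := ℝ)]
        exact (lt_floor_add_one _).le
    _ = ∑ p ∈ primesLE n, ((n / p : ℕ) : ℝ) * log p + Chebyshev.theta n := by
        rw [Chebyshev.theta_eq_sum_primesLE_log, ← sum_add_distrib]
        exact sum_congr rfl fun p _ => by ring
    _ ≤ log (smoothPart n n !) + log 4 * n := by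
        rw [log_smoothPart, floor_natCast]
        gcongr with p hp
        · exact div_le_factorization_factorial (prime_of_mem_primesLE hp) n
        · exact Chebyshev.theta_le_log4_mul_x hn'.le
    _ ≤ log (n ^ n : ℕ) + log 4 * n := by
        gcongr
        · exact_mod_cast pos_of_dvd_of_pos (smoothPart_dvd _ _) (factorial_pos n)
        · exact (le_of_dvd (factorial_pos n) (smoothPart_dvd _ _)).trans (factorial_le_pow n)
    _ = n * (log n + log 4) := by
        push_cast
        rw [Real.log_pow]
        ring

lemma sum_log_smoothPart_le {y : ℝ} (hy : 1 ≤ y) (N : ℕ) :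
    ∑ d ∈ Icc 1 N, log (smoothPart y d) ≤ 2 * N * (log y + log 4) := by
  simp_rw [log_smoothPart]
  rw [sum_comm]
  calc ∑ p ∈ primesLE ⌊y⌋₊, ∑ d ∈ Icc 1 N, (d.factorization p : ℝ) * log p
      = ∑ p ∈ primesLE ⌊y⌋₊, ((N !).factorization p : ℝ) * log p := by
        simp_rw [← sum_mul, ← cast_sum, sum_factorization_Icc]
    _ ≤ ∑ p ∈ primesLE ⌊y⌋₊, 2 * N / p * log p := by
        gcongr with p hp
        exact factorization_factorial_le_two_mul_div (prime_of_mem_primesLE hp) N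
    _ = 2 * N * ∑ p ∈ primesLE ⌊y⌋₊, log p / p := by
        rw [mul_sum]
        exact sum_congr rfl fun p _ => by ring
    _ ≤ 2 * N * (log y + log 4) := by
        gcongr
        refine (sum_primesLE_log_div_le _).trans ?_
        gcongr
        · exact_mod_cast floor_pos.2 hy
        · exact floor_le (zero_le_one.trans hy)

lemma card_filter_lt_mul_le_sum {ι : Type*} (s : Finset ι) (f : ι → ℝ) (t : ℝ)
    (hf : ∀ i ∈ s, 0 ≤ f i) : #{i ∈ s | t < f i} * t ≤ ∑ i ∈ s, f i :=
  calc #{i ∈ s | t < f i} * t = #{i ∈ s | t < f i} • t := (nsmul_eq_mul _ _).symm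
    _ ≤ ∑ i ∈ s with t < f i, f i :=
        card_nsmul_le_sum _ _ _ fun _ hi => (mem_filter.1 hi).2.le
    _ ≤ ∑ i ∈ s, f i :=
        sum_le_sum_of_subset_of_nonneg (filter_subset _ _) fun i hi _ => hf i hi

lemma card_Icc_filter_le {A : ℝ} (hA : 0 ≤ A) (N : ℕ) :
    (#{d ∈ Icc 1 N | ((d : ℕ) : ℝ) ≤ A} : ℝ) ≤ A :=
  calc (#{d ∈ Icc 1 N | ((d : ℕ) : ℝ) ≤ A} : ℝ) ≤ #(Icc 1 ⌊A⌋₊) := by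
        gcongr
        intro d hd
        rw [mem_filter, mem_Icc] at hd
        exact mem_Icc.2 ⟨hd.1.1, le_floor hd.2⟩
    _ ≤ A := by
        rw [card_Icc, add_tsub_cancel_right]
        exact floor_le hA

lemma card_not_exists_large_divisor_le {A B y : ℝ} (hA : 0 ≤ A) (hB : 1 < B) (hy : 1 ≤ y)
    (N : ℕ) :
    (#{d ∈ Icc 1 N | ¬∃ d₀ : ℕ, d₀ ∣ d ∧ A / B < d₀ ∧
      #d₀.primeFactors * log y ≤ log N} : ℝ) ≤ A + 2 * N * (log y + log 4) / log B := by
  have hlogB : 0 < log B := log_pos hB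
  set small := {d ∈ Icc 1 N | ((d : ℕ) : ℝ) ≤ A}
  set smooth := {d ∈ Icc 1 N | log B < log (smoothPart y d)}
  have hcover : {d ∈ Icc 1 N | ¬∃ d₀ : ℕ, d₀ ∣ d ∧ A / B < d₀ ∧
      #d₀.primeFactors * log y ≤ log N} ⊆ small ∪ smooth := by
    intro d hd
    simp only [small, smooth, mem_filter, mem_union, mem_Icc] at hd ⊢
    by_contra! h
    obtain ⟨⟨hd1, hdN⟩, hnot⟩ := hd
    have hd0 : d ≠ 0 := by omega
    refine hnot ⟨roughPart y d, roughPart_dvd y d,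
      div_lt_roughPart hd0 (by linarith) (h.1 ⟨hd1, hdN⟩) ?_, ?_⟩
    · have hpos : (0 : ℝ) < smoothPart y d := by
        exact_mod_cast pos_of_dvd_of_pos (smoothPart_dvd y d) (pos_of_ne_zero hd0)
      exact (log_le_log_iff hpos (by linarith)).1 (h.2 ⟨hd1, hdN⟩)
    · calc #(roughPart y d).primeFactors * log y ≤ log (roughPart y d) :=
            card_primeFactors_mul_log_le_log (by linarith)
              fun p => lt_of_mem_primeFactors_roughPart
        _ ≤ log N := by
            gcongr
            · exact_mod_cast pos_of_dvd_of_pos (roughPart_dvd y d) (pos_of_ne_zero hd0)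
            · exact (le_of_dvd (pos_of_ne_zero hd0) (roughPart_dvd y d)).trans hdN
  have hsmooth : (#smooth : ℝ) ≤ 2 * N * (log y + log 4) / log B := by
    rw [le_div_iff₀ hlogB]
    exact (card_filter_lt_mul_le_sum _ _ _ fun d _ => log_natCast_nonneg _).trans
      (sum_log_smoothPart_le hy N)
  calc _ ≤ (#(small ∪ smooth) : ℝ) := by exact_mod_cast card_le_card hcover
    _ ≤ #small + #smooth := by exact_mod_cast card_union_le _ _
    _ ≤ A + 2 * N * (log y + log 4) / log B := add_le_add (card_Icc_filter_le hA N) hsmooth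

open scoped Topology in
lemma Asymptotics.isLittleO_of_le_mul_of_tendsto_zero {α E F : Type*} [Norm E]
    [SeminormedAddCommGroup F] {l : Filter α} {f : α → E} {g : α → F} {b : α → ℝ}
    (hb : Tendsto b l (𝓝 0)) (h : ∀ᶠ x in l, ‖f x‖ ≤ b x * ‖g x‖) : f =o[l] g := by
  have hbg : (fun x => b x * ‖g x‖) =o[l] fun x => ‖g x‖ := by
    simpa using ((isLittleO_one_iff ℝ).2 hb).mul_isBigO (isBigO_refl (fun x => ‖g x‖) l)
  refine isLittleO_norm_right.1 ((IsBigO.of_bound' ?_).trans_isLittleO hbg)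
  filter_upwards [h] with x hx
  exact hx.trans (le_abs_self _)

lemma card_not_exists_divisor_le {ε : ℝ} (hε : 0 < ε) {N : ℕ} (hL : 0 < log (log N)) :
    (#{d ∈ Icc 1 N | ¬∃ d₀ : ℕ, d₀ ∣ d ∧ (N : ℝ) ^ (1 - ε) < d₀ ∧
      #d₀.primeFactors < ε * log (log N)} : ℝ) ≤
      ((N : ℝ) ^ (-(ε / 2)) + 8 / ε ^ 2 * (log (log N))⁻¹ + 4 * log 4 / ε * (log N)⁻¹) *
        N := by
  have hlogN : 1 < log N := (log_pos_iff (log_natCast_nonneg N)).1 hL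
  have hN : 1 < (N : ℝ) := (log_pos_iff (cast_nonneg N)).1 (by linarith)
  set y := exp (2 * log N / (ε * log (log N)))
  have hlogy : log y = 2 * log N / (ε * log (log N)) := log_exp _
  have hcount := card_not_exists_large_divisor_le (A := N ^ (1 - ε / 2)) (B := N ^ (ε / 2))
    (y := y) (by positivity) (one_lt_rpow hN (by positivity)) (one_le_exp (by positivity)) N
  rw [← rpow_sub (by linarith), log_rpow (by linarith),
    show 1 - ε / 2 - ε / 2 = 1 - ε by ring] at hcount
  calc _ ≤ (#{d ∈ Icc 1 N | ¬∃ d₀ : ℕ, d₀ ∣ d ∧ (N : ℝ) ^ (1 - ε) < d₀ ∧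
        #d₀.primeFactors * log y ≤ log N} : ℝ) := by
        gcongr with d
        intro hfew
        rw [hlogy, mul_div_assoc', div_le_iff₀ (by positivity)] at hfew
        have : (#d₀.primeFactors : ℝ) * 2 ≤ ε * log (log N) :=
          le_of_mul_le_mul_right (by linarith) (by linarith : 0 < log N)
        nlinarith
    _ ≤ _ := hcount
    _ = _ := by
        rw [hlogy, show 1 - ε / 2 = -(ε / 2) + 1 by ring, rpow_add_one (by positivity)]
        field_simp
        ring

/-- For every `ε > 0`, the number of integers `d ≤ N` that do not possess a
divisor `d₀ > N^(1-ε)` with fewer than `ε · log log N` distinct prime factors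
is `o(N)` as `N → ∞`. -/
theorem typical_integer_has_large_smooth_divisor (ε : ℝ) (hε : 0 < ε) :
    (fun N : ℕ =>
      (((Finset.Icc 1 N).filter (fun d =>
        ¬ ∃ d₀ : ℕ, d₀ ∣ d ∧ (N : ℝ) ^ (1 - ε) < (d₀ : ℝ) ∧
          (d₀.primeFactors.card : ℝ) < ε * Real.log (Real.log N))).card : ℝ))
      =o[atTop] (fun N : ℕ => (N : ℝ)) := by
  have hlog : Tendsto (fun N : ℕ => log N) atTop atTop :=
    tendsto_log_atTop.comp tendsto_natCast_atTop_atTop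
  have hloglog : Tendsto (fun N : ℕ => log (log N)) atTop atTop := tendsto_log_atTop.comp hlog
  refine Asymptotics.isLittleO_of_le_mul_of_tendsto_zero ?_
    ((hloglog.eventually_gt_atTop 0).mono fun N hL => by
      simpa only [norm_natCast] using card_not_exists_divisor_le hε hL)
  simpa using (((tendsto_rpow_neg_atTop (by positivity)).comp tendsto_natCast_atTop_atTop).add
    (hloglog.inv_tendsto_atTop.const_mul (8 / ε ^ 2))).add
    (hlog.inv_tendsto_atTop.const_mul (4 * log 4 / ε))
end

section
/- Let X₁, ..., Xₙ be random variables that are 2k-wise independent with E[Xᵢ] = 0, and suppose each |Xᵢ| ≤ 1 and Σ E[Xᵢ²] = V ≥ 2k. Then E[(ΣXᵢ)^{2k}] ≤ (2kV)^k. Consequently P(|Σ Xᵢ| > λ√V) ≤ (2k/λ²)^k for λ > 0. -/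
open Finset Nat

namespace HighMoment

lemma aux_two_pow_sum (r t : ℕ) : ∑ b ∈ range (t+1), 2^(r + b - 1) ≤ 2^(r + t) := by
  induction t with
  | zero =>
      rw [Finset.sum_range_one]
      exact Nat.pow_le_pow_right (by norm_num) (by omega)
  | succ t ih =>
      rw [Finset.sum_range_succ]
      have h1 : 2^(r + (t+1) - 1) = 2^(r + t) := by rw [show r + (t+1) - 1 = r + t by omega]
      calc (∑ b ∈ range (t+1), 2^(r + b - 1)) + 2^(r + (t+1) - 1)
          ≤ 2^(r+t) + 2^(r+t) := by rw [h1]; exact Nat.add_le_add_right ih _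
        _ = 2^(r + (t+1)) := by
            rw [show r + (t+1) = (r+t)+1 by omega, pow_succ, mul_two]

lemma card_piAntidiag_le {ι : Type*} [DecidableEq ι] (s : Finset ι) (t : ℕ) :
    (s.piAntidiag t).card ≤ 2 ^ (s.card + t - 1) := by
  induction s using Finset.cons_induction generalizing t with
  | empty =>
      rw [Finset.piAntidiag_empty]
      split <;> simp [Nat.one_le_two_pow]
  | cons i s hi ih =>
      rw [Finset.piAntidiag_cons hi, Finset.card_disjiUnion]
      simp only [Finset.card_map]
      calc ∑ p ∈ Finset.HasAntidiagonal.antidiagonal t, (s.piAntidiag p.2).card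
          ≤ ∑ p ∈ Finset.HasAntidiagonal.antidiagonal t, 2 ^ (s.card + p.2 - 1) :=
            Finset.sum_le_sum fun p _ => ih p.2
        _ = ∑ b ∈ range (t+1), 2 ^ (s.card + (t - b) - 1) := by
            rw [Finset.Nat.sum_antidiagonal_eq_sum_range_succ_mk]
        _ = ∑ b ∈ range (t+1), 2 ^ (s.card + b - 1) := by
            rw [← Finset.sum_range_reflect]
            refine Finset.sum_congr rfl fun j hj => ?_
            simp only [Finset.mem_range] at hj
            congr 2
            omega
        _ ≤ 2 ^ (s.card + t) := aux_two_pow_sum _ _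
        _ = 2 ^ ((Finset.cons i s hi).card + t - 1) := by
            rw [Finset.card_cons]; congr 1; omega

lemma two_pow_le_factorial (m : ℕ) : 2 ^ (m - 1) ≤ m ! := by
  induction m with
  | zero => simp
  | succ m ih =>
      match m, ih with
      | 0, _ => simp
      | (l+1), ih =>
          have h : 2 ^ (l + 1) = 2 * 2 ^ l := by rw [pow_succ]; ring
          calc 2 ^ (l+1+1-1) = 2 * 2^l := h
            _ ≤ 2 * (l+1) ! := by
                have := ih
                simp only [Nat.add_sub_cancel] at this
                omega
            _ ≤ (l+2) * (l+1) ! := Nat.mul_le_mul_right _ (by omega)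
            _ = (l+1+1) ! := rfl

lemma factorial_add_eq (a : ℕ) : ∀ b : ℕ, (a + b) ! = a ! * ∏ j ∈ range b, (a + 1 + j) := by
  intro b
  induction b with
  | zero => simp
  | succ b ih =>
      rw [show a + (b+1) = (a+b)+1 by omega, Nat.factorial_succ, ih,
        Finset.prod_range_succ]
      ring

lemma two_k_factorial_le (k : ℕ) : (2*k) ! ≤ (2*k)^k * k ! := by
  rw [two_mul, factorial_add_eq k k]
  have h : ∏ j ∈ range k, (k + 1 + j) ≤ ∏ _j ∈ range k, (k + k) := by
    apply Finset.prod_le_prod'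
    intro j hj
    simp only [Finset.mem_range] at hj
    omega
  calc k ! * ∏ j ∈ range k, (k + 1 + j) ≤ k ! * (k+k)^k := by
        simpa using Nat.mul_le_mul_left _ h
    _ = (k+k)^k * k ! := by ring

lemma geom_step (k : ℕ) (V : ℝ) (hV : 2*(k:ℝ) ≤ V) :
    ∀ j r : ℕ, 1 ≤ r → r + j ≤ k → 2^j * V^r * ((r+j) ! : ℝ) ≤ V^(r+j) * (r ! : ℝ) := by
  have hV0 : 0 ≤ V := le_trans (by positivity) hV
  intro j
  induction j with
  | zero => intro r _ _; simp
  | succ j ih =>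
      intro r hr hrj
      have h1 : r + j ≤ k := by omega
      have ih' := ih r hr h1
      have hfact : ((r + (j+1)) ! : ℝ) = (r+j+1) * ((r+j) ! : ℝ) := by
        rw [show r + (j+1) = (r+j)+1 by omega]
        push_cast [Nat.factorial_succ]
        ring
      have h2k : 2*((r:ℝ)+j+1) ≤ V := by
        refine le_trans ?_ hV
        have : (r:ℝ) + j + 1 ≤ k := by exact_mod_cast Nat.cast_le.mpr hrj
        linarith
      calc 2^(j+1) * V^r * ((r+(j+1)) ! : ℝ)
          = (2*((r:ℝ)+j+1)) * (2^j * V^r * ((r+j) ! : ℝ)) := by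
            rw [hfact]; ring
        _ ≤ (2*((r:ℝ)+j+1)) * (V^(r+j) * (r ! : ℝ)) := by
            apply mul_le_mul_of_nonneg_left ih' (by positivity)
        _ ≤ V * (V^(r+j) * (r ! : ℝ)) := by
            apply mul_le_mul_of_nonneg_right h2k (by positivity)
        _ = V^(r+(j+1)) * (r ! : ℝ) := by
            rw [show r + (j+1) = (r+j)+1 by omega, pow_succ]
            ring

/-- elementary symmetric polynomial bound: `r! e_r ≤ V^r`. -/
lemma esymm_le {n : ℕ} (r : ℕ) (σ : Fin n → ℝ) (hσ : ∀ i, 0 ≤ σ i) :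
    (r ! : ℝ) * ∑ S ∈ Finset.powersetCard r (univ : Finset (Fin n)), ∏ i ∈ S, σ i
      ≤ (∑ i, σ i)^r := by
  classical
  rw [Finset.sum_pow' univ σ r]
  rw [Fintype.piFinset_univ]
  set T : Finset (Fin r → Fin n) := univ.filter (fun p => Function.Injective p) with hT
  have hmaps : ∀ p ∈ T, Finset.image p univ ∈ Finset.powersetCard r (univ : Finset (Fin n)) := by
    intro p hp
    simp only [hT, Finset.mem_filter] at hp
    simp only [Finset.mem_powersetCard]
    exact ⟨Finset.subset_univ _, by rw [Finset.card_image_of_injective _ hp.2]; simp⟩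
  have key := Finset.sum_fiberwise_of_maps_to hmaps (fun p => ∏ j, σ (p j))
  have h1 : ∀ S ∈ Finset.powersetCard r (univ : Finset (Fin n)),
      (r ! : ℝ) * ∏ i ∈ S, σ i ≤ ∑ p ∈ T.filter (fun p => Finset.image p univ = S), ∏ j, σ (p j) := by
    intro S hS
    simp only [Finset.mem_powersetCard] at hS
    -- every p in the fiber has ∏ j, σ (p j) = ∏ i ∈ S, σ i
    have heq : ∀ p ∈ T.filter (fun p => Finset.image p univ = S), (∏ j, σ (p j)) = ∏ i ∈ S, σ i := by
      intro p hp
      simp only [hT, Finset.mem_filter, Finset.mem_univ, true_and] at hp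
      rw [← hp.2, Finset.prod_image]
      intro x _ y _ hxy
      exact hp.1 hxy
    rw [Finset.sum_congr rfl heq, Finset.sum_const, nsmul_eq_mul]
    apply mul_le_mul_of_nonneg_right _ (Finset.prod_nonneg fun i _ => hσ i)
    -- card of fiber ≥ r!
    have hcard : r ! ≤ (T.filter (fun p => Finset.image p univ = S)).card := by
      have hScard : S.card = r := hS.2
      let e := S.orderIsoOfFin hScard
      have hinj : Function.Injective (fun j : Fin r => (e j : Fin n)) := by
        intro a b hab
        exact e.injective (Subtype.ext hab)
      have himg : Finset.image (fun j : Fin r => (e j : Fin n)) univ = S := by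
        apply Finset.eq_of_subset_of_card_le
        · intro x hx
          simp only [Finset.mem_image] at hx
          obtain ⟨j, _, rfl⟩ := hx
          exact (e j).2
        · rw [Finset.card_image_of_injective _ hinj, hScard]; simp
      have : r ! = (univ : Finset (Equiv.Perm (Fin r))).card := by
        simp [Fintype.card_perm]
      rw [this]
      apply Finset.card_le_card_of_injOn (fun π => fun j => (e (π j) : Fin n))
      · intro π _
        simp only [Finset.mem_coe, Finset.mem_filter, hT, Finset.mem_univ, true_and]
        constructor
        · exact hinj.comp π.injective
        · rw [show (fun j => (e (π j) : Fin n)) = (fun j : Fin r => (e j : Fin n)) ∘ π from rfl,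
            ← Finset.image_image]
          rw [Finset.image_univ_equiv]
          exact himg
      · intro π _ π' _ hππ'
        apply Equiv.ext
        intro j
        exact hinj (congrFun hππ' j)
    calc (r ! : ℝ) ≤ ((T.filter (fun p => Finset.image p univ = S)).card : ℝ) := by
          exact_mod_cast hcard
      _ = _ := rfl
  calc (r ! : ℝ) * ∑ S ∈ Finset.powersetCard r (univ : Finset (Fin n)), ∏ i ∈ S, σ i
      = ∑ S ∈ Finset.powersetCard r (univ : Finset (Fin n)), (r ! : ℝ) * ∏ i ∈ S, σ i := by
        rw [Finset.mul_sum]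
    _ ≤ ∑ S ∈ Finset.powersetCard r (univ : Finset (Fin n)),
          ∑ p ∈ T.filter (fun p => Finset.image p univ = S), ∏ j, σ (p j) :=
        Finset.sum_le_sum h1
    _ = ∑ p ∈ T, ∏ j, σ (p j) := key
    _ ≤ ∑ p : Fin r → Fin n, ∏ j, σ (p j) := by
        apply Finset.sum_le_sum_of_subset_of_nonneg (Finset.filter_subset _ _)
        intro p _ _
        exact Finset.prod_nonneg fun j _ => hσ (p j)

lemma fiber_coeff_le {n k : ℕ} (hk : 1 ≤ k) (S : Finset (Fin n)) (hSk : S.card ≤ k) :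
    ∑ m ∈ ((univ : Finset (Fin n)).piAntidiag (2*k)).filter
        (fun m => (∀ i, m i ≠ 1) ∧ univ.filter (fun i => m i ≠ 0) = S),
      (Nat.multinomial univ m : ℝ) ≤ ((2*k) ! : ℝ) / 2 := by
  classical
  set F := ((univ : Finset (Fin n)).piAntidiag (2*k)).filter
      (fun m => (∀ i, m i ≠ 1) ∧ univ.filter (fun i => m i ≠ 0) = S) with hF
  have hmemF : ∀ m ∈ F, (∑ i, m i) = 2*k ∧ (∀ i, m i ≠ 1) ∧ (∀ i, i ∈ S ↔ m i ≠ 0) := by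
    intro m hm
    simp only [hF, Finset.mem_filter, Finset.mem_piAntidiag] at hm
    refine ⟨hm.1.1, hm.2.1, fun i => ?_⟩
    rw [← hm.2.2]
    simp
  have hge2 : ∀ m ∈ F, ∀ i ∈ S, 2 ≤ m i := by
    intro m hm i hi
    obtain ⟨_, h1, h2⟩ := hmemF m hm
    have := (h2 i).mp hi
    have := h1 i
    omega
  have hsumS : ∀ m ∈ F, ∑ i ∈ S, m i = 2*k := by
    intro m hm
    obtain ⟨h0, _, h2⟩ := hmemF m hm
    rw [← h0]
    apply Finset.sum_subset (Finset.subset_univ S)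
    intro i _ hiS
    have := (h2 i).not
    simp only [not_not] at this
    exact this.mp hiS
  have hcardF : F.card ≤ 2 ^ (2*k - S.card - 1) := by
    have hinj : F.card ≤ (S.piAntidiag (2*k - 2*S.card)).card := by
      apply Finset.card_le_card_of_injOn (fun m i => if i ∈ S then m i - 2 else 0)
      · intro m hm
        simp only [Finset.mem_coe, Finset.mem_piAntidiag]
        constructor
        · have : ∑ i ∈ S, (if i ∈ S then m i - 2 else 0) = ∑ i ∈ S, (m i - 2) :=
            Finset.sum_congr rfl fun i hi => by rw [if_pos hi]
          rw [this]
          have h2 : ∑ i ∈ S, ((m i - 2) + 2) = ∑ i ∈ S, m i :=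
            Finset.sum_congr rfl fun i hi => by have := hge2 m hm i hi; omega
          rw [Finset.sum_add_distrib, Finset.sum_const, smul_eq_mul, mul_comm] at h2
          have h3 := hsumS m hm
          omega
        · intro i hi
          by_cases h : i ∈ S
          · exact h
          · simp [h] at hi
      · intro m hm m' hm' hmm'
        funext i
        by_cases h : i ∈ S
        · have e1 := congrFun hmm' i
          simp only [if_pos h] at e1
          have := hge2 m hm i h
          have := hge2 m' hm' i h
          omega
        · have h1 := ((hmemF m hm).2.2 i).not
          have h2 := ((hmemF m' hm').2.2 i).not
          simp only [not_not] at h1 h2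
          rw [h1.mp h, h2.mp h]
    refine le_trans hinj (le_trans (card_piAntidiag_le _ _) ?_)
    apply Nat.pow_le_pow_right (by norm_num)
    omega
  have hterm : ∀ m ∈ F, (Nat.multinomial univ m : ℝ) ≤ ((2*k) ! : ℝ) / 2 ^ (2*k - S.card) := by
    intro m hm
    have hexp : ∑ i ∈ S, (m i - 1) = 2*k - S.card := by
      have h2 : ∑ i ∈ S, ((m i - 1) + 1) = ∑ i ∈ S, m i :=
        Finset.sum_congr rfl fun i hi => by have := hge2 m hm i hi; omega
      rw [Finset.sum_add_distrib, Finset.sum_const, smul_eq_mul, mul_one] at h2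
      have h3 := hsumS m hm
      have h4 : S.card ≤ 2*k := by omega
      omega
    have hfact : 2 ^ (2*k - S.card) ≤ ∏ i, (m i) ! := by
      calc 2 ^ (2*k - S.card) = ∏ i ∈ S, 2 ^ (m i - 1) := by
            rw [Finset.prod_pow_eq_pow_sum, hexp]
        _ ≤ ∏ i ∈ S, (m i) ! := Finset.prod_le_prod' fun i _ => two_pow_le_factorial _
        _ ≤ ∏ i, (m i) ! := Finset.prod_le_prod_of_subset_of_one_le' (Finset.subset_univ S)
            (fun i _ _ => Nat.one_le_iff_ne_zero.mpr (Nat.factorial_ne_zero _))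
    have hN : Nat.multinomial univ m * 2 ^ (2*k - S.card) ≤ (2*k) ! := by
      calc Nat.multinomial univ m * 2 ^ (2*k - S.card)
          ≤ Nat.multinomial univ m * ∏ i, (m i) ! := Nat.mul_le_mul_left _ hfact
        _ = (2*k) ! := by
            rw [mul_comm, Nat.multinomial_spec, (hmemF m hm).1]
    rw [le_div_iff₀ (by positivity)]
    exact_mod_cast hN
  calc ∑ m ∈ F, (Nat.multinomial univ m : ℝ)
      ≤ F.card • (((2*k) ! : ℝ) / 2 ^ (2*k - S.card)) := Finset.sum_le_card_nsmul _ _ _ hterm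
    _ = (F.card : ℝ) * (((2*k) ! : ℝ) / 2 ^ (2*k - S.card)) := nsmul_eq_mul _ _
    _ ≤ (2 ^ (2*k - S.card - 1) : ℝ) * (((2*k) ! : ℝ) / 2 ^ (2*k - S.card)) := by
        apply mul_le_mul_of_nonneg_right _ (by positivity)
        exact_mod_cast hcardF
    _ = ((2*k) ! : ℝ) / 2 := by
        rw [show 2*k - S.card = (2*k - S.card - 1) + 1 by omega, pow_succ]
        field_simp
        ring_nf
        congr 1
        omega

lemma comb_main {n : ℕ} (k : ℕ) (hk : 1 ≤ k) (σ : Fin n → ℝ) (hσ : ∀ i, 0 ≤ σ i)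
    (V : ℝ) (hV : V = ∑ i, σ i) (hVk : 2*(k:ℝ) ≤ V) :
    ∑ m ∈ ((univ : Finset (Fin n)).piAntidiag (2*k)).filter (fun m => ∀ i, m i ≠ 1),
      (Nat.multinomial univ m : ℝ) * ∏ i ∈ univ.filter (fun i => m i ≠ 0), σ i
      ≤ (2*(k:ℝ))^k * V^k := by
  classical
  have hV0 : (0:ℝ) ≤ V := le_trans (by positivity) hVk
  set A := ((univ : Finset (Fin n)).piAntidiag (2*k)).filter (fun m => ∀ i, m i ≠ 1) with hA
  have hgroup := Finset.sum_fiberwise_of_maps_to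
      (g := fun m : Fin n → ℕ => univ.filter (fun i => m i ≠ 0))
      (t := (univ : Finset (Fin n)).powerset)
      (s := A)
      (fun m _ => Finset.mem_powerset.mpr (Finset.filter_subset _ _))
      (fun m => (Nat.multinomial univ m : ℝ) * ∏ i ∈ univ.filter (fun i => m i ≠ 0), σ i)
  rw [← hgroup]
  have hinner : ∀ S ∈ (univ : Finset (Fin n)).powerset,
      (∑ m ∈ A.filter (fun m => univ.filter (fun i => m i ≠ 0) = S),
        (Nat.multinomial univ m : ℝ) * ∏ i ∈ univ.filter (fun i => m i ≠ 0), σ i)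
      ≤ (if 1 ≤ S.card ∧ S.card ≤ k then (((2*k) ! : ℝ) / 2) * ∏ i ∈ S, σ i else 0) := by
    intro S _
    by_cases hgood : 1 ≤ S.card ∧ S.card ≤ k
    · rw [if_pos hgood]
      have hcong : ∀ m ∈ A.filter (fun m => univ.filter (fun i => m i ≠ 0) = S),
          (Nat.multinomial univ m : ℝ) * ∏ i ∈ univ.filter (fun i => m i ≠ 0), σ i
            = (Nat.multinomial univ m : ℝ) * ∏ i ∈ S, σ i := by
        intro m hm
        rw [Finset.mem_filter] at hm
        rw [hm.2]
      rw [Finset.sum_congr rfl hcong, ← Finset.sum_mul]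
      apply mul_le_mul_of_nonneg_right _ (Finset.prod_nonneg fun i _ => hσ i)
      have := fiber_coeff_le (n := n) hk S hgood.2
      rw [hA, Finset.filter_filter]
      exact this
    · rw [if_neg hgood]
      apply le_of_eq
      apply Finset.sum_eq_zero
      intro m hm
      exfalso
      apply hgood
      simp only [hA, Finset.mem_filter, Finset.mem_piAntidiag] at hm
      obtain ⟨⟨⟨hsum, -⟩, h1⟩, hsupp⟩ := hm
      constructor
      · -- S nonempty
        rcases Finset.eq_empty_or_nonempty S with rfl | hne
        · -- then m = 0 and sum = 0 ≠ 2k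
          exfalso
          have : ∀ i, m i = 0 := by
            intro i
            by_contra h
            have : i ∈ univ.filter (fun i => m i ≠ 0) := by simp [h]
            rw [hsupp] at this
            exact absurd this (Finset.notMem_empty i)
          rw [Finset.sum_congr rfl (fun i _ => this i)] at hsum
          simp at hsum
          omega
        · exact Finset.card_pos.mpr hne
      · -- card S ≤ k
        have h2 : ∀ i ∈ S, 2 ≤ m i := by
          intro i hi
          rw [← hsupp] at hi
          simp only [Finset.mem_filter] at hi
          have := h1 i
          omega
        have hSsum : 2 * S.card ≤ ∑ i ∈ S, m i := by
          calc 2 * S.card = ∑ _i ∈ S, 2 := by rw [Finset.sum_const, smul_eq_mul, mul_comm]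
            _ ≤ ∑ i ∈ S, m i := Finset.sum_le_sum h2
        have hle : ∑ i ∈ S, m i ≤ ∑ i, m i :=
          Finset.sum_le_sum_of_subset (Finset.subset_univ S)
        have hsum' : (∑ i, m i) = 2*k := hsum
        omega
  have step1 : ∑ S ∈ (univ : Finset (Fin n)).powerset,
      (∑ m ∈ A.filter (fun m => univ.filter (fun i => m i ≠ 0) = S),
        (Nat.multinomial univ m : ℝ) * ∏ i ∈ univ.filter (fun i => m i ≠ 0), σ i)
      ≤ (((2*k) ! : ℝ) / 2) *
        ∑ S ∈ ((univ : Finset (Fin n)).powerset).filter (fun S => 1 ≤ S.card ∧ S.card ≤ k),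
          ∏ i ∈ S, σ i := by
    calc ∑ S ∈ (univ : Finset (Fin n)).powerset,
        (∑ m ∈ A.filter (fun m => univ.filter (fun i => m i ≠ 0) = S),
          (Nat.multinomial univ m : ℝ) * ∏ i ∈ univ.filter (fun i => m i ≠ 0), σ i)
        ≤ ∑ S ∈ (univ : Finset (Fin n)).powerset,
            (if 1 ≤ S.card ∧ S.card ≤ k then (((2*k) ! : ℝ) / 2) * ∏ i ∈ S, σ i else 0) :=
          Finset.sum_le_sum hinner
      _ = ∑ S ∈ ((univ : Finset (Fin n)).powerset).filter (fun S => 1 ≤ S.card ∧ S.card ≤ k),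
            (((2*k) ! : ℝ) / 2) * ∏ i ∈ S, σ i := (Finset.sum_filter _ _).symm
      _ = _ := by rw [Finset.mul_sum]
  set D := ((univ : Finset (Fin n)).powerset).filter (fun S => 1 ≤ S.card ∧ S.card ≤ k) with hD
  have hregroup := Finset.sum_fiberwise_of_maps_to
      (g := fun S : Finset (Fin n) => S.card) (t := Finset.Icc 1 k) (s := D)
      (fun S hS => by
        simp only [hD, Finset.mem_filter] at hS
        simp only [Finset.mem_Icc]
        exact hS.2)
      (fun S => ∏ i ∈ S, σ i)
  have hfib : ∀ r ∈ Finset.Icc 1 k, D.filter (fun S => S.card = r)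
      = Finset.powersetCard r (univ : Finset (Fin n)) := by
    intro r hr
    simp only [Finset.mem_Icc] at hr
    ext S
    simp only [hD, Finset.mem_filter, Finset.mem_powerset, Finset.mem_powersetCard]
    constructor
    · rintro ⟨⟨hsub, -⟩, hc⟩
      exact ⟨hsub, hc⟩
    · rintro ⟨hsub, hc⟩
      exact ⟨⟨hsub, by omega⟩, hc⟩
  have step2 : ∑ S ∈ D, ∏ i ∈ S, σ i ≤ ∑ r ∈ Finset.Icc 1 k, V^r / (r ! : ℝ) := by
    rw [← hregroup]
    apply Finset.sum_le_sum
    intro r hr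
    rw [hfib r hr]
    have h1 := esymm_le r σ hσ
    rw [← hV] at h1
    rw [le_div_iff₀ (by positivity : (0:ℝ) < (r ! : ℝ))]
    calc (∑ S ∈ Finset.powersetCard r (univ : Finset (Fin n)), ∏ i ∈ S, σ i) * (r ! : ℝ)
        = (r ! : ℝ) * ∑ S ∈ Finset.powersetCard r (univ : Finset (Fin n)), ∏ i ∈ S, σ i := by ring
      _ ≤ V^r := h1
  have step3 : ∑ r ∈ Finset.Icc 1 k, V^r / (r ! : ℝ) ≤ 2 * (V^k / (k ! : ℝ)) := by
    have hterm : ∀ r ∈ Finset.Icc 1 k, V^r / (r ! : ℝ) ≤ (V^k / (k ! : ℝ)) * (1/2)^(k - r) := by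
      intro r hr
      simp only [Finset.mem_Icc] at hr
      have hg := geom_step k V hVk (k - r) r hr.1 (by omega)
      rw [show r + (k - r) = k by omega] at hg
      rw [div_pow, one_pow, _root_.div_mul_div_comm, mul_one,
        div_le_div_iff₀ (by positivity) (by positivity)]
      nlinarith [hg]
    calc ∑ r ∈ Finset.Icc 1 k, V^r / (r ! : ℝ)
        ≤ ∑ r ∈ Finset.Icc 1 k, (V^k / (k ! : ℝ)) * (1/2)^(k - r) := Finset.sum_le_sum hterm
      _ = (V^k / (k ! : ℝ)) * ∑ r ∈ Finset.Icc 1 k, ((1:ℝ)/2)^(k - r) := by rw [Finset.mul_sum]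
      _ ≤ (V^k / (k ! : ℝ)) * 2 := by
          apply mul_le_mul_of_nonneg_left _ (by positivity)
          calc ∑ r ∈ Finset.Icc 1 k, ((1:ℝ)/2)^(k - r)
              ≤ ∑ r ∈ Finset.range (k+1), ((1:ℝ)/2)^(k - r) := by
                apply Finset.sum_le_sum_of_subset_of_nonneg
                · intro r hr
                  simp only [Finset.mem_Icc] at hr
                  simp only [Finset.mem_range]
                  omega
                · intro r _ _
                  positivity
            _ = ∑ j ∈ Finset.range (k+1), ((1:ℝ)/2)^j := by
                rw [← Finset.sum_range_reflect]
                apply Finset.sum_congr rfl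
                intro j hj
                simp only [Finset.mem_range] at hj
                congr 1
                omega
            _ ≤ 2 := by
                rw [geom_sum_eq (by norm_num : ((1:ℝ)/2) ≠ 1)]
                have h1 : (0:ℝ) ≤ (1/2:ℝ)^(k+1) := by positivity
                rw [div_le_iff_of_neg (by norm_num : ((1:ℝ)/2 - 1) < 0)]
                linarith
      _ = 2 * (V^k / (k ! : ℝ)) := by ring
  have hfin : (((2*k) ! : ℝ) / 2) * (2 * (V^k / (k ! : ℝ))) ≤ (2*(k:ℝ))^k * V^k := by
    have hcast : ((2*k) ! : ℝ) ≤ (2*(k:ℝ))^k * (k ! : ℝ) := by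
      have h2 : (((2*k) ! : ℕ) : ℝ) ≤ (((2*k)^k * k ! : ℕ) : ℝ) := by
        exact_mod_cast two_k_factorial_le k
      push_cast at h2
      exact h2
    have hk0 : (0:ℝ) < (k ! : ℝ) := by positivity
    have hVk0 : (0:ℝ) ≤ V^k := by positivity
    have heq : (((2*k) ! : ℝ) / 2) * (2 * (V^k / (k ! : ℝ)))
        = ((2*k) ! : ℝ) * V^k / (k ! : ℝ) := by
      field_simp
    rw [heq, div_le_iff₀ hk0]
    nlinarith [mul_le_mul_of_nonneg_right hcast hVk0]
  calc ∑ S ∈ (univ : Finset (Fin n)).powerset,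
      (∑ m ∈ A.filter (fun m => univ.filter (fun i => m i ≠ 0) = S),
        (Nat.multinomial univ m : ℝ) * ∏ i ∈ univ.filter (fun i => m i ≠ 0), σ i)
      ≤ (((2*k) ! : ℝ) / 2) * ∑ S ∈ D, ∏ i ∈ S, σ i := step1
    _ ≤ (((2*k) ! : ℝ) / 2) * (2 * (V^k / (k ! : ℝ))) := by
        apply mul_le_mul_of_nonneg_left (le_trans step2 step3) (by positivity)
    _ ≤ (2*(k:ℝ))^k * V^k := hfin

end HighMoment

section Analysis

open MeasureTheory ProbabilityTheory

variable {Ω : Type*} [MeasureSpace Ω] [IsProbabilityMeasure (ℙ : Measure Ω)]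

lemma integrable_of_abs_le (f : Ω → ℝ) (hm : Measurable f) (C : ℝ) (h : ∀ ω, |f ω| ≤ C) :
    Integrable f ℙ := by
  refine (integrable_const C).mono' hm.aestronglyMeasurable ?_
  refine Filter.Eventually.of_forall fun ω => ?_
  simpa [Real.norm_eq_abs] using h ω

lemma integral_prod_of_indep {ι : Type*} (Y : ι → Ω → ℝ)
    (h : iIndepFun Y ℙ) (hm : ∀ i, Measurable (Y i))
    (hb : ∀ i ω, |Y i ω| ≤ 1) (t : Finset ι) :
    ∫ ω, ∏ i ∈ t, Y i ω ∂ℙ = ∏ i ∈ t, ∫ ω, Y i ω ∂ℙ := by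
  classical
  have hint : ∀ u : Finset ι, Integrable (fun ω => ∏ j ∈ u, Y j ω) ℙ := by
    intro u
    apply integrable_of_abs_le _ (Finset.measurable_prod u fun j _ => hm j) 1
    intro ω
    rw [Finset.abs_prod]
    exact Finset.prod_le_one (fun j _ => abs_nonneg _) (fun j _ => hb j ω)
  induction t using Finset.cons_induction with
  | empty => simp
  | cons i t hi ih =>
      have hIndep : IndepFun (fun ω => ∏ j ∈ t, Y j ω) (Y i) ℙ := by
        have h2 := h.indepFun_finsetProd_of_notMem hm hi
        have he : (∏ j ∈ t, Y j) = fun ω => ∏ j ∈ t, Y j ω := by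
          funext ω
          simp [Finset.prod_apply]
        rwa [he] at h2
      have key := hIndep.integral_mul_eq_mul_integral (hint t).aestronglyMeasurable
        (integrable_of_abs_le _ (hm i) 1 (fun ω => hb i ω)).aestronglyMeasurable
      have hmuleq : ((fun ω => ∏ j ∈ t, Y j ω) * Y i) = fun ω => Y i ω * ∏ j ∈ t, Y j ω := by
        funext ω
        simp only [Pi.mul_apply]
        ring
      rw [hmuleq] at key
      simp_rw [Finset.prod_cons]
      rw [key, ih, mul_comm]

end Analysis

open MeasureTheory ProbabilityTheory HighMoment Finset

/-- High-moment Chebyshev under `2k`-wise independence: if `X₁, …, Xₙ` are mean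
zero, bounded by `1`, any `2k` of them mutually independent, and
`V = ∑ E[Xᵢ²] ≥ 2k`, then `E[(∑ Xᵢ)^(2k)] ≤ (2kV)^k` and for `λ > 0`,
`P(|∑ Xᵢ| > λ√V) ≤ (2k/λ²)^k`. -/
theorem high_moment_chebyshev {Ω : Type*} [MeasureSpace Ω]
    [IsProbabilityMeasure (ℙ : Measure Ω)]
    (n k : ℕ) (hk : 1 ≤ k) (X : Fin n → Ω → ℝ)
    (hmeas : ∀ i, Measurable (X i))
    (hbdd : ∀ i, ∀ ω, |X i ω| ≤ 1)
    (hmean : ∀ i, (∫ ω, X i ω ∂ℙ) = 0)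
    (hindep : ∀ s : Finset (Fin n), s.card ≤ 2 * k →
      iIndepFun (fun i : s => X i) ℙ)
    (V : ℝ) (hV : V = ∑ i, ∫ ω, (X i ω) ^ 2 ∂ℙ)
    (hVk : 2 * k ≤ V) (lam : ℝ) (hlam : 0 < lam) :
    (∫ ω, (∑ i, X i ω) ^ (2 * k) ∂ℙ) ≤ (2 * k * V) ^ k ∧
    ℙ {ω | lam * Real.sqrt V < |∑ i, X i ω|} ≤
      ENNReal.ofReal ((2 * k / lam ^ 2) ^ k) := by
  classical
  have hkR : (1:ℝ) ≤ (k:ℝ) := by exact_mod_cast hk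
  have hVpos : (0:ℝ) < V := lt_of_lt_of_le (by linarith) hVk
  have hV0 : (0:ℝ) ≤ V := hVpos.le
  set σ : Fin n → ℝ := fun i => ∫ ω, (X i ω)^2 ∂ℙ with hσdef
  have hσ0 : ∀ i, 0 ≤ σ i := fun i => integral_nonneg (fun ω => sq_nonneg _)
  have hXb : ∀ (i : Fin n) (m : ℕ) ω, |X i ω ^ m| ≤ 1 := fun i m ω => by
    rw [abs_pow]
    exact pow_le_one₀ (abs_nonneg _) (hbdd i ω)
  have hintpow : ∀ (i : Fin n) (m : ℕ), Integrable (fun ω => X i ω ^ m) ℙ := fun i m =>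
    integrable_of_abs_le _ ((hmeas i).pow_const _) 1 (fun ω => hXb i m ω)
  have hintprod : ∀ (m : Fin n → ℕ), Integrable (fun ω => ∏ i, X i ω ^ m i) ℙ := by
    intro m
    apply integrable_of_abs_le _
      (Finset.measurable_prod _ fun i _ => (hmeas i).pow_const _) 1
    intro ω
    rw [Finset.abs_prod]
    exact Finset.prod_le_one (fun i _ => abs_nonneg _) (fun i _ => hXb i (m i) ω)
  have hmom : ∀ (i : Fin n) (m : ℕ), 2 ≤ m → |∫ ω, X i ω ^ m ∂ℙ| ≤ σ i := by
    intro i m hm2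
    calc |∫ ω, X i ω ^ m ∂ℙ| ≤ ∫ ω, |X i ω ^ m| ∂ℙ := by
          simpa [Real.norm_eq_abs] using
            norm_integral_le_integral_norm (μ := (ℙ : Measure Ω)) (fun ω => X i ω ^ m)
      _ ≤ ∫ ω, (X i ω)^2 ∂ℙ := by
          apply integral_mono (hintpow i m).abs (hintpow i 2)
          intro ω
          show |X i ω ^ m| ≤ X i ω ^ 2
          rw [abs_pow]
          calc |X i ω|^m ≤ |X i ω|^2 := pow_le_pow_of_le_one (abs_nonneg _) (hbdd i ω) hm2
            _ = X i ω^2 := sq_abs _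
  have hfact : ∀ m ∈ (univ : Finset (Fin n)).piAntidiag (2*k),
      (∫ ω, ∏ i, X i ω ^ m i ∂ℙ)
        = ∏ i ∈ univ.filter (fun i => m i ≠ 0), ∫ ω, X i ω ^ m i ∂ℙ := by
    intro m hm
    rw [Finset.mem_piAntidiag] at hm
    set s := univ.filter (fun i => m i ≠ 0) with hs
    have hzero : ∀ i, i ∉ s → m i = 0 := by
      intro i hi
      simpa [hs, not_not] using hi
    have hscard : s.card ≤ 2*k := by
      have h1 : ∀ i ∈ s, 1 ≤ m i := by
        intro i hi
        simp only [hs, Finset.mem_filter] at hi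
        omega
      calc s.card = ∑ _i ∈ s, 1 := by simp
        _ ≤ ∑ i ∈ s, m i := Finset.sum_le_sum h1
        _ = ∑ i, m i := Finset.sum_subset (Finset.subset_univ s) (fun i _ hi => hzero i hi)
        _ = 2*k := hm.1
    have hY := (hindep s hscard).comp (fun (i : s) (x : ℝ) => x ^ m i.1)
      (fun i => measurable_id.pow_const _)
    have hprod := integral_prod_of_indep
        (fun (i : s) => (fun x : ℝ => x ^ m i.1) ∘ X i.1) hY
        (fun i => (hmeas i.1).pow_const _) (fun i ω => hXb i.1 (m i.1) ω)
        Finset.univ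
    have hre : ∀ ω, (∏ i, X i ω ^ m i) = ∏ i ∈ s, X i ω ^ m i := by
      intro ω
      symm
      apply Finset.prod_subset (Finset.subset_univ s)
      intro i _ hi
      rw [hzero i hi, pow_zero]
    have hre2 : ∀ ω, (∏ i ∈ s, X i ω ^ m i) = ∏ i : s, X (↑i) ω ^ m ↑i := fun ω =>
      (Finset.prod_coe_sort _ _).symm
    simp_rw [hre, hre2]
    rw [← Finset.prod_coe_sort s (fun i => ∫ ω, X i ω ^ m i ∂ℙ)]
    simpa using hprod
  have part1 : (∫ ω, (∑ i, X i ω) ^ (2*k) ∂ℙ) ≤ (2 * k * V) ^ k := by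
    have hexp : ∀ ω, (∑ i, X i ω) ^ (2*k)
        = ∑ m ∈ (univ : Finset (Fin n)).piAntidiag (2*k),
            (Nat.multinomial univ m : ℝ) * ∏ i, X i ω ^ m i := fun ω =>
      Finset.sum_pow_eq_sum_piAntidiag univ (fun i => X i ω) (2*k)
    simp_rw [hexp]
    rw [integral_finset_sum _ (fun m _ => (hintprod m).const_mul _)]
    simp_rw [integral_const_mul]
    rw [← Finset.sum_filter_add_sum_filter_not ((univ : Finset (Fin n)).piAntidiag (2*k))
      (fun m => ∀ i, m i ≠ 1)]
    have hzero2 : (∑ m ∈ ((univ : Finset (Fin n)).piAntidiag (2*k)).filter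
        (fun m => ¬ (∀ i, m i ≠ 1)),
        (Nat.multinomial univ m : ℝ) * ∫ ω, ∏ i, X i ω ^ m i ∂ℙ) = 0 := by
      apply Finset.sum_eq_zero
      intro m hm
      rw [Finset.mem_filter] at hm
      obtain ⟨hmem, hni⟩ := hm
      push_neg at hni
      obtain ⟨i, hi⟩ := hni
      rw [hfact m hmem]
      have hiS : i ∈ univ.filter (fun j => m j ≠ 0) := by simp [hi]
      rw [Finset.prod_eq_zero hiS, mul_zero]
      rw [hi]
      simpa using hmean i
    rw [hzero2, add_zero]
    calc ∑ m ∈ ((univ : Finset (Fin n)).piAntidiag (2*k)).filter (fun m => ∀ i, m i ≠ 1),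
          (Nat.multinomial univ m : ℝ) * ∫ ω, ∏ i, X i ω ^ m i ∂ℙ
        ≤ ∑ m ∈ ((univ : Finset (Fin n)).piAntidiag (2*k)).filter (fun m => ∀ i, m i ≠ 1),
          (Nat.multinomial univ m : ℝ) * ∏ i ∈ univ.filter (fun i => m i ≠ 0), σ i := by
          apply Finset.sum_le_sum
          intro m hm
          rw [Finset.mem_filter] at hm
          rw [hfact m hm.1]
          apply mul_le_mul_of_nonneg_left _ (by positivity)
          calc ∏ i ∈ univ.filter (fun i => m i ≠ 0), ∫ ω, X i ω ^ m i ∂ℙ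
              ≤ |∏ i ∈ univ.filter (fun i => m i ≠ 0), ∫ ω, X i ω ^ m i ∂ℙ| := le_abs_self _
            _ = ∏ i ∈ univ.filter (fun i => m i ≠ 0), |∫ ω, X i ω ^ m i ∂ℙ| :=
                Finset.abs_prod _ _
            _ ≤ ∏ i ∈ univ.filter (fun i => m i ≠ 0), σ i := by
                apply Finset.prod_le_prod (fun i _ => abs_nonneg _)
                intro i hi
                simp only [Finset.mem_filter] at hi
                have h1 := hm.2 i
                exact hmom i (m i) (by omega)
      _ ≤ (2*(k:ℝ))^k * V^k :=
          comb_main k hk σ hσ0 V (by rw [hV]) hVk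
      _ = (2 * k * V) ^ k := by ring
  refine ⟨part1, ?_⟩
  set S : Ω → ℝ := fun ω => ∑ i, X i ω with hS
  have hSmeas : Measurable S := Finset.measurable_sum _ (fun i _ => hmeas i)
  have hSb : ∀ ω, |S ω| ≤ (n:ℝ) := fun ω => by
    calc |∑ i, X i ω| ≤ ∑ i, |X i ω| := Finset.abs_sum_le_sum_abs _ _
      _ ≤ ∑ _i : Fin n, (1:ℝ) := Finset.sum_le_sum (fun i _ => hbdd i ω)
      _ = n := by simp
  have hfint : Integrable (fun ω => S ω ^ (2*k)) ℙ :=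
    integrable_of_abs_le _ (hSmeas.pow_const _) ((n:ℝ)^(2*k)) (fun ω => by
      rw [abs_pow]
      exact pow_le_pow_left₀ (abs_nonneg _) (hSb ω) _)
  have hfnn : ∀ ω, 0 ≤ S ω ^ (2*k) := fun ω => by
    rw [pow_mul]
    exact pow_nonneg (sq_nonneg _) k
  set ε : ℝ := (lam * Real.sqrt V) ^ (2*k) with hε
  have hsqrtpos : 0 < Real.sqrt V := Real.sqrt_pos.mpr hVpos
  have hεpos : 0 < ε := pow_pos (by positivity) _
  have hmarkov := mul_meas_ge_le_integral_of_nonneg (μ := (ℙ : Measure Ω))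
    (Filter.Eventually.of_forall hfnn) hfint ε
  have hsub : {ω | lam * Real.sqrt V < |S ω|} ⊆ {ω | ε ≤ S ω ^ (2*k)} := by
    intro ω hω
    simp only [Set.mem_setOf_eq] at hω ⊢
    calc ε = (lam * Real.sqrt V)^(2*k) := rfl
      _ ≤ |S ω| ^ (2*k) := pow_le_pow_left₀ (by positivity) hω.le _
      _ = S ω ^ (2*k) := (even_two_mul k).pow_abs _
  have htoReal : (ℙ {ω | ε ≤ S ω ^ (2*k)}).toReal ≤ ((2*(k:ℝ))/lam^2)^k := by
    have h1 : ε * (ℙ {ω | ε ≤ S ω ^ (2*k)}).toReal ≤ (2*(k:ℝ)*V)^k := le_trans hmarkov part1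
    have h2 : (ℙ {ω | ε ≤ S ω ^ (2*k)}).toReal ≤ (2*(k:ℝ)*V)^k / ε := by
      rw [le_div_iff₀ hεpos]
      nlinarith [h1]
    refine le_trans h2 (le_of_eq ?_)
    have hεval : ε = (lam^2)^k * V^k := by
      rw [hε, mul_pow, ← pow_mul, pow_mul (Real.sqrt V) 2 k, Real.sq_sqrt hV0, pow_mul]
    rw [hεval, mul_pow (2*(k:ℝ)) V, div_pow]
    rw [mul_div_mul_right _ _ (ne_of_gt (pow_pos hVpos k))]
  calc ℙ {ω | lam * Real.sqrt V < |S ω|} ≤ ℙ {ω | ε ≤ S ω ^ (2*k)} := measure_mono hsub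
    _ = ENNReal.ofReal ((ℙ {ω | ε ≤ S ω ^ (2*k)}).toReal) :=
        (ENNReal.ofReal_toReal (measure_ne_top _ _)).symm
    _ ≤ ENNReal.ofReal ((2 * k / lam ^ 2) ^ k) := ENNReal.ofReal_le_ofReal htoReal
end
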